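/- For every z ∈ ℂ with z ≠ 0 and zI−A_p invertible, the matrix zI−Ã is invertible and C_n (zI−Ã)^{−1} B̃ = z^{−n}·P(z), where P(z) = C_p(zI−A_p)^{−1}B_p + D_p. -/

import Mathlib

open Matrix Finset

noncomputable section

/-- The lifted matrix `Ã = [[A_p, B_p, 0],[0, 0, I_{n-1}],[0, 0, 0]]`. -/
def Atil (np n : ℕ) (Ap : Matrix (Fin np) (Fin np) ℝ) (Bp : Matrix (Fin np) (Fin 1) ℝ) :
    Matrix (Fin np ⊕ Fin n) (Fin np ⊕ Fin n) ℝ :=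
  Matrix.fromBlocks Ap
    (Matrix.of fun i (j : Fin n) => if (j : ℕ) = 0 then Bp i 0 else 0) 0
    (Matrix.of fun (i j : Fin n) => if (j : ℕ) = (i : ℕ) + 1 then (1 : ℝ) else 0)

/-- The lifted input matrix `B̃ = (0,…,0,1)ᵀ`. -/
def Btil (np n : ℕ) : Matrix (Fin np ⊕ Fin n) (Fin 1) ℝ :=
  Matrix.of fun i _ =>
    Sum.elim (fun _ => (0 : ℝ)) (fun j : Fin n => if (j : ℕ) = n - 1 then 1 else 0) i

/-- The row vector `C_n = [C_p, D_p, 0_{n-1}]`. -/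
def Cnrow (np n : ℕ) (Cp : Matrix (Fin 1) (Fin np) ℝ) (Dp : ℝ) :
    Matrix (Fin 1) (Fin np ⊕ Fin n) ℝ :=
  Matrix.of fun _ j =>
    Sum.elim (fun a => Cp 0 a) (fun b : Fin n => if (b : ℕ) = 0 then Dp else 0) j


variable {n : ℕ}

/-- shift matrix -/
def Nmat (n : ℕ) : Matrix (Fin n) (Fin n) ℂ :=
  Matrix.of fun (i j : Fin n) => if (j : ℕ) = (i : ℕ) + 1 then (1 : ℂ) else 0

def Smat (n : ℕ) (z : ℂ) : Matrix (Fin n) (Fin n) ℂ :=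
  Matrix.of fun (i j : Fin n) => if (i : ℕ) ≤ (j : ℕ) then z ^ (-(((j:ℕ):ℤ) - ((i:ℕ):ℤ) + 1)) else 0

lemma shift_mul_S (n : ℕ) (z : ℂ) (hz0 : z ≠ 0) :
    (z • (1 : Matrix (Fin n) (Fin n) ℂ) - Nmat n) * Smat n z = 1 := by
  ext i j
  rw [Matrix.mul_apply]
  have hexp : ∀ k : Fin n, (z • (1 : Matrix (Fin n) (Fin n) ℂ) - Nmat n) i k
      = (if i = k then z else 0) - (if (k : ℕ) = (i : ℕ) + 1 then 1 else 0) := by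
    intro k
    simp [Nmat, Matrix.one_apply, mul_ite]
  simp only [hexp, sub_mul, Finset.sum_sub_distrib, ite_mul, zero_mul, one_mul,
    Finset.sum_ite_eq, Finset.mem_univ, if_true]
  have hT : (∑ k : Fin n, if (k : ℕ) = (i : ℕ) + 1 then Smat n z k j else 0)
      = if h : (i : ℕ) + 1 < n then Smat n z ⟨(i:ℕ)+1, h⟩ j else 0 := by
    split_ifs with h
    · rw [Finset.sum_eq_single (⟨(i:ℕ)+1, h⟩ : Fin n)]
      · simp
      · intro b _ hb
        rw [if_neg]
        intro hb'
        exact hb (Fin.ext hb')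
      · simp
    · apply Finset.sum_eq_zero
      intro k _
      rw [if_neg]
      intro hk
      omega
  rw [hT]
  rcases lt_trichotomy (i : ℕ) (j : ℕ) with hij | hij | hij
  · have h : (i : ℕ) + 1 < n := lt_of_le_of_lt hij j.isLt
    rw [dif_pos h]
    have hne : i ≠ j := by intro e; rw [e] at hij; omega
    rw [Matrix.one_apply_ne hne]
    simp only [Smat, Matrix.of_apply]
    rw [if_pos (le_of_lt hij), if_pos (show ((⟨(i:ℕ)+1, h⟩ : Fin n) : ℕ) ≤ (j:ℕ) from hij)]
    show z * z ^ (-(((j:ℕ):ℤ) - ((i:ℕ):ℤ) + 1)) - z ^ (-(((j:ℕ):ℤ) - (((i:ℕ):ℤ) + 1) + 1)) = 0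
    rw [sub_eq_zero, mul_comm, ← zpow_add_one₀ hz0]
    congr 1
    ring
  · have hij' : i = j := Fin.ext hij
    subst hij'
    rw [Matrix.one_apply_eq]
    have hS : Smat n z i i = z ^ (-1 : ℤ) := by
      simp [Smat]
    rw [hS]
    have h2 : (if h : (i : ℕ) + 1 < n then Smat n z ⟨(i:ℕ)+1, h⟩ i else 0) = 0 := by
      split_ifs with h
      · simp only [Smat, Matrix.of_apply]
        rw [if_neg]
        omega
      · rfl
    rw [h2, sub_zero, _root_.zpow_neg_one, mul_inv_cancel₀ hz0]
  · have hne : i ≠ j := by intro e; rw [e] at hij; omega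
    rw [Matrix.one_apply_ne hne]
    have hS : Smat n z i j = 0 := by
      simp only [Smat, Matrix.of_apply]
      rw [if_neg]; omega
    rw [hS, mul_zero]
    have h2 : (if h : (i : ℕ) + 1 < n then Smat n z ⟨(i:ℕ)+1, h⟩ j else 0) = 0 := by
      split_ifs with h
      · simp only [Smat, Matrix.of_apply]
        rw [if_neg]; omega
      · rfl
    rw [h2, sub_zero]

def Emat (n : ℕ) : Matrix (Fin 1) (Fin n) ℂ :=
  Matrix.of fun _ j => if (j : ℕ) = 0 then (1 : ℂ) else 0

def Rmat (n : ℕ) : Matrix (Fin n) (Fin 1) ℂ :=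
  Matrix.of fun j _ => if (j : ℕ) = n - 1 then (1 : ℂ) else 0

lemma ESR (n : ℕ) (hn : 1 ≤ n) (z : ℂ) :
    Emat n * Smat n z * Rmat n = (z ^ (-(n : ℤ))) • (1 : Matrix (Fin 1) (Fin 1) ℂ) := by
  have h0n : 0 < n := hn
  have hES : Emat n * Smat n z = Matrix.of fun _ k => Smat n z ⟨0, h0n⟩ k := by
    ext i k
    rw [Matrix.mul_apply]
    rw [Finset.sum_eq_single (⟨0, h0n⟩ : Fin n)]
    · simp [Emat]
    · intro b _ hb
      simp only [Emat, Matrix.of_apply]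
      rw [if_neg, zero_mul]
      intro hb'; exact hb (Fin.ext hb')
    · simp
  rw [hES]
  ext i j
  rw [Matrix.mul_apply]
  rw [Finset.sum_eq_single (⟨n - 1, by omega⟩ : Fin n)]
  · have h1 : Rmat n ⟨n - 1, by omega⟩ j = 1 := by simp [Rmat]
    have h2 : Smat n z ⟨0, h0n⟩ ⟨n - 1, by omega⟩ = z ^ (-(n : ℤ)) := by
      simp only [Smat, Matrix.of_apply, Fin.val_mk]
      rw [if_pos (Nat.zero_le _)]
      congr 1
      push_cast [hn]
      ring
    rw [Matrix.of_apply, h1, h2, mul_one]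
    have : i = j := Subsingleton.elim i j
    simp [this, Matrix.one_apply_eq]
  · intro b _ hb
    simp only [Rmat, Matrix.of_apply]
    rw [if_neg, mul_zero]
    intro hb'; exact hb (Fin.ext hb')
  · simp

/-- for `z ≠ 0` with `zI - A_p` invertible, `zI - Ã` is invertible and
`C_n (zI - Ã)⁻¹ B̃ = z^{-n} P(z)` where `P(z) = C_p (zI - A_p)⁻¹ B_p + D_p`. -/
theorem lifted_realization_delay (np n : ℕ) (hn : 1 ≤ n)
    (Ap : Matrix (Fin np) (Fin np) ℝ) (Bp : Matrix (Fin np) (Fin 1) ℝ)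
    (Cp : Matrix (Fin 1) (Fin np) ℝ) (Dp : ℝ) (z : ℂ) (hz0 : z ≠ 0)
    (hz : IsUnit (z • (1 : Matrix (Fin np) (Fin np) ℂ) - Ap.map Complex.ofReal)) :
    IsUnit (z • (1 : Matrix (Fin np ⊕ Fin n) (Fin np ⊕ Fin n) ℂ)
        - (Atil np n Ap Bp).map Complex.ofReal) ∧
      (((Cnrow np n Cp Dp).map Complex.ofReal) *
          (z • (1 : Matrix (Fin np ⊕ Fin n) (Fin np ⊕ Fin n) ℂ)
            - (Atil np n Ap Bp).map Complex.ofReal)⁻¹ *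
          ((Btil np n).map Complex.ofReal)) 0 0 =
        z ^ (-(n : ℤ)) *
          (((Cp.map Complex.ofReal) *
              (z • (1 : Matrix (Fin np) (Fin np) ℂ) - Ap.map Complex.ofReal)⁻¹ *
              (Bp.map Complex.ofReal)) 0 0 + (Dp : ℂ)) := by
  set A := z • (1 : Matrix (Fin np) (Fin np) ℂ) - Ap.map Complex.ofReal with hA
  set D := z • (1 : Matrix (Fin n) (Fin n) ℂ) - Nmat n with hDdef
  set Bp' : Matrix (Fin np) (Fin 1) ℂ := Bp.map Complex.ofReal with hBp'
  set Cp' : Matrix (Fin 1) (Fin np) ℂ := Cp.map Complex.ofReal with hCp'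
  set Bb : Matrix (Fin np) (Fin n) ℂ := Bp' * Emat n with hBbdef
  have hD : D * Smat n z = 1 := shift_mul_S n z hz0
  letI : Invertible D := invertibleOfRightInverse _ _ hD
  have hSinv : ⅟D = Smat n z := invOf_eq_right_inv hD
  letI : Invertible A := hz.invertible
  have hblock : z • (1 : Matrix (Fin np ⊕ Fin n) (Fin np ⊕ Fin n) ℂ)
      - (Atil np n Ap Bp).map Complex.ofReal = Matrix.fromBlocks A (-Bb) 0 D := by
    ext (i | i) (j | j) <;>
      simp [Atil, Nmat, Emat, hBbdef, hA, hDdef, hBp', Matrix.mul_apply, Fin.sum_univ_one,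
        Matrix.map_apply, Matrix.one_apply, Matrix.smul_apply, Matrix.sub_apply,
        apply_ite Complex.ofReal, mul_ite, sub_eq_iff_eq_add]
  letI : Invertible (Matrix.fromBlocks A (-Bb) 0 D) :=
    Matrix.fromBlocksZero₂₁Invertible A (-Bb) D
  constructor
  · rw [hblock]; exact isUnit_of_invertible _
  · rw [hblock, ← Matrix.invOf_eq_nonsing_inv, Matrix.invOf_fromBlocks_zero₂₁_eq, hSinv]
    have hC : (Cnrow np n Cp Dp).map Complex.ofReal
        = Matrix.fromCols Cp' ((Dp : ℂ) • Emat n) := by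
      ext i (j | j) <;>
        simp [Cnrow, Emat, hCp', Matrix.map_apply, apply_ite Complex.ofReal, Fin.eq_zero i]
    have hB : (Btil np n).map Complex.ofReal
        = Matrix.fromRows (0 : Matrix (Fin np) (Fin 1) ℂ) (Rmat n) := by
      ext (i | i) j <;>
        simp [Btil, Rmat, Matrix.map_apply, apply_ite Complex.ofReal]
    have hQ : -(⅟A * -Bb * Smat n z) = ⅟A * Bp' * (Emat n * Smat n z) := by
      rw [hBbdef]
      simp only [Matrix.neg_mul, Matrix.mul_neg, neg_neg, Matrix.mul_assoc]
    rw [hC, hB, hQ, Matrix.fromCols_mul_fromBlocks, Matrix.fromCols_mul_fromRows]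
    have hmain : Cp' * (⅟A * Bp' * (Emat n * Smat n z)) * Rmat n
        = (z ^ (-(n : ℤ))) • (Cp' * ⅟A * Bp') := by
      rw [show Cp' * (⅟A * Bp' * (Emat n * Smat n z)) * Rmat n
          = Cp' * ⅟A * Bp' * (Emat n * Smat n z * Rmat n) by
        simp only [Matrix.mul_assoc]]
      rw [ESR n hn z, Matrix.mul_smul, Matrix.mul_one]
    have hDpart : (Dp : ℂ) • Emat n * Smat n z * Rmat n
        = ((Dp : ℂ) * z ^ (-(n : ℤ))) • (1 : Matrix (Fin 1) (Fin 1) ℂ) := by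
      rw [Matrix.smul_mul, Matrix.smul_mul, ESR n hn z, smul_smul]
    simp only [Matrix.mul_zero, Matrix.zero_mul, add_zero, zero_add, Matrix.add_mul]
    rw [hmain, hDpart, Matrix.invOf_eq_nonsing_inv]
    simp only [Matrix.add_apply, Matrix.smul_apply, Matrix.one_apply_eq, smul_eq_mul]
    ring
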